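/- arXiv:1402.2806 — 2 statements merged into one kernel-verified Lean document; each statement's English description precedes it below -/
import Mathlib

section
/- Let H be a graph on 8 vertices with no independent set of size 3 and no K_4 subgraph. If (A, B) is a separation of H of order 1 (i.e., V(H) = A ∪ B, no edges between A \ B and B \ A, and |A ∩ B| = 1, with A \ B and B \ A nonempty), then a contradiction follows; in particular H has no cutvertex. -/
/-!
If `H` has no independent set of size 3, a vertex `b` nonadjacent to every vertex of a set `S`
forces `S` to be a clique, since a non-edge `xy` in `S` would give the independent set `{x, y, b}`.
Hence both sides `A \ B` and `B \ A` of a separation are cliques, and if `H` is also `K₄`-free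
they have at most three vertices each. So `H` has at most `6 + |A ∩ B|` vertices, which is `7`
for a separation of order 1.
-/

namespace SimpleGraph

variable {V : Type*} {H : SimpleGraph V}

theorem IsClique.card_lt_of_cliqueFree {n : ℕ} {s : Finset V} (hs : H.IsClique (s : Set V))
    (hfree : H.CliqueFree n) : s.card < n := by
  by_contra! hn
  obtain ⟨t, hts, htn⟩ := Finset.exists_subset_card_eq hn
  exact hfree t ⟨hs.subset (by exact_mod_cast hts), htn⟩

theorem isClique_of_forall_not_adj (hind : Hᶜ.CliqueFree 3) {S : Set V} {b : V} (hb : b ∉ S)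
    (hnadj : ∀ x ∈ S, ¬ H.Adj x b) : H.IsClique S := by
  classical
  intro x hx y hy hxy
  by_contra hxy_nadj
  have hxb : x ≠ b := ne_of_mem_of_not_mem hx hb
  have hyb : y ≠ b := ne_of_mem_of_not_mem hy hb
  refine hind {x, y, b} (is3Clique_triple_iff.mpr ⟨?_, ?_, ?_⟩)
  · exact (compl_adj H x y).mpr ⟨hxy, hxy_nadj⟩
  · exact (compl_adj H x b).mpr ⟨hxb, hnadj x hx⟩
  · exact (compl_adj H y b).mpr ⟨hyb, hnadj y hy⟩

variable [DecidableEq V]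

theorem isClique_sdiff_of_separation (hind : Hᶜ.CliqueFree 3) {A B : Finset V}
    (hB : (B \ A).Nonempty) (hsep : ∀ a ∈ A \ B, ∀ b ∈ B \ A, ¬ H.Adj a b) :
    H.IsClique ((A \ B : Finset V) : Set V) := by
  obtain ⟨b, hb⟩ := hB
  have hb_notMem : b ∉ A \ B := fun hb' ↦ (Finset.mem_sdiff.mp hb).2 (Finset.mem_sdiff.mp hb').1
  exact isClique_of_forall_not_adj hind (by exact_mod_cast hb_notMem) fun x hx ↦ hsep x hx b hb

theorem card_le_of_separation [Fintype V] (hind : Hᶜ.CliqueFree 3) {n : ℕ}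
    (hfree : H.CliqueFree (n + 1)) {A B : Finset V} (hUnion : A ∪ B = Finset.univ)
    (hA : (A \ B).Nonempty) (hB : (B \ A).Nonempty)
    (hsep : ∀ a ∈ A \ B, ∀ b ∈ B \ A, ¬ H.Adj a b) :
    Fintype.card V ≤ 2 * n + (A ∩ B).card := by
  have hAB := (isClique_sdiff_of_separation hind hB hsep).card_lt_of_cliqueFree hfree
  have hBA := (isClique_sdiff_of_separation hind hA
    fun b hb a ha h ↦ hsep a ha b hb h.symm).card_lt_of_cliqueFree hfree
  have hpart : (A \ B).card + (B \ A).card + (A ∩ B).card = Fintype.card V := by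
    have hunion := Finset.card_union_add_card_inter A B
    have hA' := Finset.card_sdiff_add_card_inter A B
    have hB' := Finset.card_sdiff_add_card_inter B A
    rw [hUnion, Finset.card_univ] at hunion
    rw [Finset.inter_comm] at hB'
    omega
  omega

end SimpleGraph

/-- A graph on 8 vertices with no independent set of size 3 and no `K₄`
subgraph admits no separation of order 1; in particular it has no cutvertex. -/
theorem stmt_6 (H : SimpleGraph (Fin 8))
    (hind : Hᶜ.CliqueFree 3) (hK4 : H.CliqueFree 4)
    (A B : Finset (Fin 8))
    (hUnion : A ∪ B = Finset.univ)
    (hA : (A \ B).Nonempty) (hB : (B \ A).Nonempty)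
    (hsep : ∀ a ∈ A \ B, ∀ b ∈ B \ A, ¬ H.Adj a b)
    (horder : (A ∩ B).card = 1) :
    False := by
  have hcard := H.card_le_of_separation hind hK4 hUnion hA hB hsep
  simp only [Fintype.card_fin, horder] at hcard
  omega
end

section
/- If a 7-connected graph G contains K_6 minus an edge (K_6^-) as a subgraph and has at least one vertex outside this subgraph, then G contains a K_7^- minor (K_7 minus one edge). -/
/-
Contract the vertices outside the `K₆⁻` into a single branch set: deleting the six vertices of
the `K₆⁻` leaves, by 7-connectivity, a connected graph containing `x`. Each vertex `f i` of the
`K₆⁻` has a neighbour in that set, because deleting the other five vertices keeps `f i` and `x`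
in one connected piece. The six singletons `{f i}` together with this set are branch sets of a
`K₇⁻` minor, the new set playing the role of the seventh vertex.
-/

/-- `H` is a minor of `G`: there is a family of pairwise disjoint nonempty
connected branch sets in `G`, one for each vertex of `H`, such that every edge
of `H` is realized by an edge of `G` between the corresponding branch sets. -/
def HasMinor {V W : Type*} (G : SimpleGraph V) (H : SimpleGraph W) : Prop :=
  ∃ f : W → Set V,
    (∀ w, (G.induce (f w)).Connected) ∧
    (Pairwise (Function.onFun Disjoint f)) ∧
    (∀ ⦃w₁ w₂⦄, H.Adj w₁ w₂ → ∃ v₁ ∈ f w₁, ∃ v₂ ∈ f w₂, G.Adj v₁ v₂)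

/-- `K₆` minus one edge. -/
def K6minus : SimpleGraph (Fin 6) :=
  (⊤ : SimpleGraph (Fin 6)).deleteEdges {s(0, 1)}

/-- `K₇` minus one edge. -/
def K7minus : SimpleGraph (Fin 7) :=
  (⊤ : SimpleGraph (Fin 7)).deleteEdges {s(0, 1)}

open SimpleGraph

theorem SimpleGraph.exists_adj_mem_of_connected_induce {V : Type*} {G : SimpleGraph V}
    {s : Set V} (hs : (G.induce s).Connected) {u x : V} (hu : u ∈ s) (hx : x ∈ s) (hux : u ≠ x) :
    ∃ v ∈ s, G.Adj u v := by
  have : Nontrivial s := ⟨⟨⟨u, hu⟩, ⟨x, hx⟩, fun h => hux (congrArg Subtype.val h)⟩⟩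
  obtain ⟨v, hv⟩ := hs.preconnected.exists_adj_of_nontrivial ⟨u, hu⟩
  exact ⟨v, v.2, hv⟩

theorem SimpleGraph.exists_adj_notMem_of_forall_induce_compl_connected {V : Type*}
    {G : SimpleGraph V} {n : ℕ} (hconn : ∀ s : Set V, s.ncard ≤ n → (G.induce sᶜ).Connected)
    {T : Set V} (hT : T.ncard ≤ n + 1) {u x : V} (hu : u ∈ T) (hx : x ∉ T) :
    ∃ v ∉ T, G.Adj u v := by
  have hdel : (T \ {u}).ncard ≤ n := by
    rw [Set.ncard_sdiff_singleton_of_mem hu]; omega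
  obtain ⟨v, hv, huv⟩ := exists_adj_mem_of_connected_induce (hconn _ hdel)
    (u := u) (by simp) (x := x) (by simp [hx]) (by rintro rfl; exact hx hu)
  refine ⟨v, fun hvT => hv ⟨hvT, ?_⟩, huv⟩
  rintro rfl
  exact G.irrefl huv

theorem hasMinor_of_apex {V : Type*} {G : SimpleGraph V} {n : ℕ} {H : SimpleGraph (Fin (n + 1))}
    (f : Fin n ↪ V) (hf : ∀ i j, H.Adj i.castSucc j.castSucc → G.Adj (f i) (f j))
    {S : Set V} (hS : (G.induce S).Connected) (hSf : Disjoint S (Set.range f))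
    (hapex : ∀ i, ∃ v ∈ S, G.Adj (f i) v) : HasMinor G H := by
  have hfS : ∀ i, f i ∉ S := fun i hi => Set.disjoint_right.1 hSf (Set.mem_range_self i) hi
  refine ⟨Fin.snoc (α := fun _ => Set V) (fun i => {f i}) S, fun w => ?_, fun w₁ w₂ hne => ?_,
    fun w₁ w₂ hadj => ?_⟩
  · induction w using Fin.lastCases with
    | last => rwa [Fin.snoc_last]
    | cast i =>
      rw [Fin.snoc_castSucc, induce_singleton_eq_top]
      exact connected_top
  · induction w₁ using Fin.lastCases <;> induction w₂ using Fin.lastCases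
    · exact absurd rfl hne
    · simpa [Function.onFun] using hfS _
    · simpa [Function.onFun] using hfS _
    · simpa [Function.onFun] using hne
  · induction w₁ using Fin.lastCases <;> induction w₂ using Fin.lastCases
    · exact absurd hadj H.irrefl
    · obtain ⟨v, hv, hiv⟩ := hapex _
      simpa using ⟨v, hv, hiv.symm⟩
    · simpa using hapex _
    · simpa using hf _ _ hadj

theorem K7minus_adj_castSucc_iff {i j : Fin 6} :
    K7minus.Adj i.castSucc j.castSucc ↔ K6minus.Adj i j := by
  have h01 : s((0 : Fin 7), 1) = Sym2.map Fin.castSucc s(0, 1) := rfl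
  simp only [K7minus, K6minus, deleteEdges_adj, top_adj, Set.mem_singleton_iff, h01, ← Sym2.map_mk,
    (Sym2.map.injective (Fin.castSucc_injective 6)).eq_iff, ne_eq, Fin.castSucc_inj]

theorem stmt_18_general {V : Type*} (G : SimpleGraph V)
    (hconn : ∀ s : Set V, s.ncard ≤ 6 → (G.induce sᶜ).Connected)
    (f : Fin 6 ↪ V)
    (hsub : ∀ i j : Fin 6, K6minus.Adj i j → G.Adj (f i) (f j))
    (x : V) (hx : ∀ i : Fin 6, x ≠ f i) :
    HasMinor G K7minus := by
  have hrange : (Set.range f).ncard = 6 := by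
    rw [Set.ncard_range_of_injective f.injective, Nat.card_fin]
  have hxf : x ∉ Set.range f := fun ⟨i, hi⟩ => hx i hi.symm
  refine hasMinor_of_apex f (fun i j h => hsub i j (K7minus_adj_castSucc_iff.1 h))
    (hconn _ hrange.le) disjoint_compl_left fun i => ?_
  exact exists_adj_notMem_of_forall_induce_compl_connected hconn (by omega)
    (Set.mem_range_self i) hxf

/-- If a 7-connected graph `G` (more than 7 vertices, connected after deleting
any 6 vertices) contains `K₆⁻` as a subgraph together with a vertex outside
this subgraph, then `G` has a `K₇⁻` minor. -/
theorem stmt_18 {V : Type*} [Fintype V] (G : SimpleGraph V)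
    (hcard : 7 < Fintype.card V)
    (hconn : ∀ s : Set V, s.ncard ≤ 6 → (G.induce sᶜ).Connected)
    (f : Fin 6 ↪ V)
    (hsub : ∀ i j : Fin 6, K6minus.Adj i j → G.Adj (f i) (f j))
    (x : V) (hx : ∀ i : Fin 6, x ≠ f i) :
    HasMinor G K7minus :=
  stmt_18_general G hconn f hsub x hx
end
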